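/- Let m ≥ 2 be an integer, c > 0 a real, and ψ_1, …, ψ_{m+1} arbitrary real numbers. Set κ = m c²/(m−1), let ψ̃ = (ψ_{m+1}, ψ_1, …, ψ_m)ᵀ ∈ ℝ^{m+1}, and let V be the (m+1)×(m+1) symmetric matrix given in block form by V = [ [−m, 1_mᵀ], [1_m, κ I_m − ((κ+1)/m) 1_m 1_mᵀ] ], where 1_m ∈ ℝ^m is the all-ones vector and I_m the m×m identity matrix. Then |ψ_{m+1} − ψ̄_m| > c S_m if and only if ψ̃ᵀ V ψ̃ < 0. -/

import Mathlib

open MeasureTheory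

/-- Sample mean of `y_1, …, y_m`. -/
noncomputable def sMean {m : ℕ} (y : Fin m → ℝ) : ℝ := (∑ j, y j) / (m : ℝ)

/-- Sample variance of `y_1, …, y_m`. -/
noncomputable def sVar {m : ℕ} (y : Fin m → ℝ) : ℝ :=
  (∑ j, (y j - sMean y) ^ 2) / ((m : ℝ) - 1)

/-- The matrix `V = [[−m, 1ᵀ], [1, κ I − ((κ+1)/m) 1 1ᵀ]]` with `κ = m c²/(m−1)`,
where index `0` corresponds to the treated cluster. -/
noncomputable def Vmat (m : ℕ) (c : ℝ) : Matrix (Fin (m + 1)) (Fin (m + 1)) ℝ :=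
  fun i j =>
    if i = 0 then (if j = 0 then -(m : ℝ) else 1)
    else if j = 0 then 1
    else (if i = j then (m : ℝ) * c ^ 2 / ((m : ℝ) - 1) else 0) -
      ((m : ℝ) * c ^ 2 / ((m : ℝ) - 1) + 1) / (m : ℝ)

/-!
Write `a = ψ_{m+1}`, `S = ∑ y_j` and `T = ∑ y_j²` where `y_j = ψ_j` for `j ≤ m`. The quadratic form
expands to `-m a² + 2 a S + κ T - (κ + 1) S² / m`. Since `κ (T - S² / m) = κ (m - 1) S_m² = m c² S_m²`
and `-m a² + 2 a S - S² / m = -m (a - ȳ_m)²`, it equals `m (c² S_m² - (a - ȳ_m)²)`, and the claim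
follows by comparing the squares of the nonnegative numbers `c S_m` and `|a - ȳ_m|`.
-/

open Finset Matrix

theorem sum_sq_sub_sMean {m : ℕ} (y : Fin m → ℝ) :
    ∑ j, (y j - sMean y) ^ 2 = ∑ j, y j ^ 2 - (∑ j, y j) ^ 2 / m := by
  rcases Nat.eq_zero_or_pos m with rfl | hm
  · simp
  have hm' : (m : ℝ) ≠ 0 := by positivity
  simp only [sub_sq, sum_add_distrib, sum_sub_distrib, ← sum_mul, ← mul_sum, sum_const,
    card_univ, Fintype.card_fin, nsmul_eq_mul, sMean]
  field_simp
  ring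

theorem sub_one_mul_sVar {m : ℕ} (hm : m ≠ 1) (y : Fin m → ℝ) :
    ((m : ℝ) - 1) * sVar y = ∑ j, y j ^ 2 - (∑ j, y j) ^ 2 / m := by
  have : (m : ℝ) - 1 ≠ 0 := sub_ne_zero.2 (by exact_mod_cast hm)
  rw [sVar, mul_div_cancel₀ _ this, sum_sq_sub_sMean]

theorem sVar_nonneg {m : ℕ} (y : Fin m → ℝ) : 0 ≤ sVar y := by
  rcases Nat.eq_zero_or_pos m with rfl | hm
  · simp [sVar]
  exact div_nonneg (sum_nonneg fun j _ => sq_nonneg _)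
    (sub_nonneg.2 (Nat.one_le_cast.2 hm))

theorem mul_sqrt_lt_abs_iff {c v d : ℝ} (hc : 0 ≤ c) (hv : 0 ≤ v) :
    c * √v < |d| ↔ c ^ 2 * v < d ^ 2 := by
  rw [← Real.sqrt_sq_eq_abs, Real.lt_sqrt (by positivity), mul_pow, Real.sq_sqrt hv]

section Vmat

variable (m : ℕ) (c : ℝ)

noncomputable def kappa : ℝ := m * c ^ 2 / (m - 1)

theorem Vmat_zero_zero : Vmat m c 0 0 = -m := by simp [Vmat]

theorem Vmat_zero_succ (j : Fin m) : Vmat m c 0 j.succ = 1 := by simp [Vmat]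

theorem Vmat_succ_zero (i : Fin m) : Vmat m c i.succ 0 = 1 := by simp [Vmat]

theorem Vmat_succ_succ (i j : Fin m) :
    Vmat m c i.succ j.succ = (if i = j then kappa m c else 0) - (kappa m c + 1) / m := by
  simp [Vmat, kappa]

theorem Vmat_mulVec_cons_zero (a : ℝ) (y : Fin m → ℝ) :
    (Vmat m c *ᵥ Fin.cons a y) 0 = -m * a + ∑ j, y j := by
  simp [mulVec, dotProduct, Fin.sum_univ_succ, Vmat_zero_zero, Vmat_zero_succ]

theorem Vmat_mulVec_cons_succ (a : ℝ) (y : Fin m → ℝ) (i : Fin m) :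
    (Vmat m c *ᵥ Fin.cons a y) i.succ =
      a + kappa m c * y i - (kappa m c + 1) / m * ∑ j, y j := by
  simp only [mulVec, dotProduct, Fin.sum_univ_succ, Fin.cons_zero, Fin.cons_succ, Vmat_succ_zero,
    Vmat_succ_succ, one_mul, sub_mul, ite_mul, zero_mul, sum_sub_distrib, sum_ite_eq, mem_univ,
    if_true, mul_sum]
  ring

theorem cons_dotProduct_Vmat_mulVec_cons_eq_sums (a : ℝ) (y : Fin m → ℝ) :
    Fin.cons a y ⬝ᵥ (Vmat m c *ᵥ Fin.cons a y) =
      -m * a ^ 2 + 2 * a * ∑ j, y j + kappa m c * ∑ j, y j ^ 2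
        - (kappa m c + 1) / m * (∑ j, y j) ^ 2 := by
  simp only [dotProduct, Fin.sum_univ_succ, Fin.cons_zero, Fin.cons_succ, Vmat_mulVec_cons_zero,
    Vmat_mulVec_cons_succ, mul_sub, mul_add, sum_add_distrib, sum_sub_distrib,
    mul_left_comm _ (kappa m c), ← sq, ← sum_mul, ← mul_sum]
  ring

end Vmat

theorem cons_dotProduct_Vmat_mulVec_cons {m : ℕ} (hm : 2 ≤ m) (c a : ℝ) (y : Fin m → ℝ) :
    Fin.cons a y ⬝ᵥ (Vmat m c *ᵥ Fin.cons a y) = m * (c ^ 2 * sVar y - (a - sMean y) ^ 2) := by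
  have hm0 : (m : ℝ) ≠ 0 := by positivity
  have hm1 : (m : ℝ) - 1 ≠ 0 := sub_ne_zero.2 (by exact_mod_cast (by omega : m ≠ 1))
  have hvar := sub_one_mul_sVar (by omega : m ≠ 1) y
  rw [cons_dotProduct_Vmat_mulVec_cons_eq_sums, sMean, kappa]
  field_simp at hvar ⊢
  linear_combination (-(m : ℝ) * c ^ 2) * hvar

/-- Lemma S1 of the paper: `|ψ_{m+1} − ψ̄_m| > c S_m ↔ ψ̃ᵀ V ψ̃ < 0`,
where `ψ̃ = (ψ_{m+1}, ψ_1, …, ψ_m)ᵀ`. -/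
theorem stmt9 (m : ℕ) (hm : 2 ≤ m) (c : ℝ) (hc : 0 < c) (ψ : Fin (m + 1) → ℝ) :
    |ψ (Fin.last m) - sMean (fun j : Fin m => ψ j.castSucc)| >
        c * Real.sqrt (sVar (fun j : Fin m => ψ j.castSucc)) ↔
      dotProduct (Fin.cons (ψ (Fin.last m)) (fun j : Fin m => ψ j.castSucc))
        ((Vmat m c).mulVec (Fin.cons (ψ (Fin.last m)) (fun j : Fin m => ψ j.castSucc))) < 0 := by
  have hm0 : (0 : ℝ) < m := by positivity
  rw [gt_iff_lt, mul_sqrt_lt_abs_iff hc.le (sVar_nonneg _), cons_dotProduct_Vmat_mulVec_cons hm,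
    ← sub_neg]
  exact ⟨mul_neg_of_pos_of_neg hm0, fun h => neg_of_mul_neg_right h hm0.le⟩
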